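/- Let G_0, …, G_{n_c} be admissible feasibility sets, let q_0, …, q_{n_c} ≥ 0, and let C_G : D_G → ℝ be Lipschitz continuous. Define the running cost g(x, p_G) := C_G(p_G) + Σ_{i=0}^{n_c} q_i Φ_{G_i}(p_G, x^+) for x ∈ ℝ^{n_L} and p_G ∈ D_G, where x^+ denotes the componentwise positive part of x. Then there exists a constant C₂ > 0 such that |g(x, p_G) − g(x', p_G')| ≤ C₂ (‖x − x'‖ + ‖p_G − p_G'‖) for all x, x' ∈ ℝ^{n_L} and all p_G, p_G' ∈ D_G, where ‖·‖ denotes the Euclidean norm. -/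

import Mathlib

open scoped BigOperators

/-- The minimal load-shedding cost
`Φ_G(p_G, p_D) := inf { c^⊤ z : z ∈ ℝ^{n_L}_+, (p_G, p_D − z) ∈ G }`. -/
noncomputable def loadShedCost {nG nL : ℕ} (c : EuclideanSpace ℝ (Fin nL))
    (G : Set (EuclideanSpace ℝ (Fin nG) × EuclideanSpace ℝ (Fin nL)))
    (pG : EuclideanSpace ℝ (Fin nG)) (pD : EuclideanSpace ℝ (Fin nL)) : ℝ :=
  sInf {t : ℝ | ∃ z : EuclideanSpace ℝ (Fin nL),
    (∀ j, 0 ≤ z j) ∧ (pG, pD - z) ∈ G ∧ t = ∑ j, c j * z j}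

/-- `G ⊆ ℝ^{n_G} × ℝ^{n_L}` is an admissible feasibility set (relative to `D_G`). -/
structure IsAdmissibleFeasibilitySet {nG nL : ℕ}
    (DG : Set (EuclideanSpace ℝ (Fin nG)))
    (G : Set (EuclideanSpace ℝ (Fin nG) × EuclideanSpace ℝ (Fin nL))) : Prop where
  /-- (A) `G` is convex -/
  convex : Convex ℝ G
  /-- (A) `G` is compact -/
  compact : IsCompact G
  /-- (A) `G ⊆ ℝ^{n_G} × ℝ^{n_L}_+` -/
  snd_nonneg : ∀ p ∈ G, ∀ j, 0 ≤ p.2 j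
  /-- (B) load shedding can always restore feasibility -/
  shed : ∀ pG ∈ DG, ∀ pD : EuclideanSpace ℝ (Fin nL), (∀ j, 0 ≤ pD j) →
    ∃ z : EuclideanSpace ℝ (Fin nL), (∀ j, 0 ≤ z j) ∧ (pG, pD - z) ∈ G
  /-- (C) nonempty interior slices -/
  interior_slice : ∀ pG ∈ DG, ∃ pD : EuclideanSpace ℝ (Fin nL), (pG, pD) ∈ interior G
  /-- (D) load over-satisfaction -/
  oversat : ∀ pG pD, (pG, pD) ∈ G →
    ∀ pD' : EuclideanSpace ℝ (Fin nL), (∀ j, 0 ≤ pD' j) → (∀ j, pD' j ≤ pD j) →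
      (pG, pD') ∈ G


/-- The componentwise positive part `x⁺` of `x ∈ ℝ^{n_L}`. -/
noncomputable def posPart {nL : ℕ} (x : EuclideanSpace ℝ (Fin nL)) :
    EuclideanSpace ℝ (Fin nL) :=
  (EuclideanSpace.equiv (Fin nL) ℝ).symm (fun j => max (x j) 0)

/-! Each `Φ_{G_i}` is Lipschitz on `D_G × ℝ^{n_L}_+`, and the positive part is 1-Lipschitz. By
compactness of `D_G` and (C), the fibres of `G` over `D_G` contain balls of a common radius `ε`, and
`G` is bounded by some `M`. A convex combination with such a ball moves a feasible point `(p, y)`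
over `p'`, losing at most `M / ε * ‖p - p'‖` per coordinate; over-satisfaction (D) then turns the
shedding vector `pD - y` at `(p, pD)` into one at `(p', pD')` that costs
`O(‖p - p'‖ + ‖pD - pD'‖)` more. -/

open Metric Topology

namespace EuclideanSpace

variable {n : ℕ}

lemma abs_apply_le_norm (y : EuclideanSpace ℝ (Fin n)) (j : Fin n) : |y j| ≤ ‖y‖ :=
  PiLp.norm_apply_le y j

lemma norm_le_norm_of_abs_apply_le {u v : EuclideanSpace ℝ (Fin n)}
    (h : ∀ j, |u j| ≤ |v j|) : ‖u‖ ≤ ‖v‖ := by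
  rw [EuclideanSpace.norm_eq, EuclideanSpace.norm_eq]
  gcongr with j
  simpa only [Real.norm_eq_abs] using h j

end EuclideanSpace

lemma Finset.sum_mul_le_sum_mul_add {ι : Type*} [Fintype ι] {c a b : ι → ℝ} {d : ℝ}
    (hc : ∀ j, 0 ≤ c j) (h : ∀ j, a j ≤ b j + d) :
    ∑ j, c j * a j ≤ ∑ j, c j * b j + (∑ j, c j) * d := by
  rw [Finset.sum_mul, ← Finset.sum_add_distrib]
  gcongr with j
  rw [← mul_add]
  exact mul_le_mul_of_nonneg_left (h j) (hc j)

lemma posPart_apply {n : ℕ} (x : EuclideanSpace ℝ (Fin n)) (j : Fin n) :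
    posPart x j = max (x j) 0 := rfl

lemma norm_posPart_sub_posPart_le {n : ℕ} (x x' : EuclideanSpace ℝ (Fin n)) :
    ‖posPart x - posPart x'‖ ≤ ‖x - x'‖ :=
  EuclideanSpace.norm_le_norm_of_abs_apply_le fun j => by
    simpa [posPart_apply] using abs_max_sub_max_le_abs (x j) (x' j) 0

theorem IsCompact.exists_pos_forall_closedBall_subset {X Y : Type*} [PseudoMetricSpace X]
    [PseudoMetricSpace Y] {K : Set X} (hK : IsCompact K) {G : Set (X × Y)}
    (h : ∀ p ∈ K, ∃ w, (p, w) ∈ interior G) :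
    ∃ ε > 0, ∀ p ∈ K, ∃ w, closedBall (p, w) ε ⊆ G := by
  -- tube lemma: for each `p ∈ K` the condition holds for all `(ε, p')` near `(0, p)`
  have hev : ∀ᶠ ε in 𝓝 (0 : ℝ), ∀ p ∈ K, ∃ w, closedBall (p, w) ε ⊆ G := by
    refine hK.eventually_forall_of_forall_eventually fun p hp => ?_
    obtain ⟨w, hw⟩ := h p hp
    obtain ⟨r, hr, hball⟩ := Metric.isOpen_iff.mp isOpen_interior _ hw
    filter_upwards [ball_mem_nhds ((0 : ℝ), p) (half_pos hr)] with ⟨ε, p'⟩ hz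
    refine ⟨w, (closedBall_subset_ball' ?_).trans (hball.trans interior_subset)⟩
    rw [mem_ball, Prod.dist_eq, max_lt_iff, Real.dist_0_eq_abs] at hz
    rw [Prod.dist_eq, dist_self, max_eq_left dist_nonneg]
    linarith [le_abs_self ε, hz.1, hz.2]
  obtain ⟨ε, hε, hεpos⟩ := ((hev.filter_mono nhdsWithin_le_nhds).and
    (self_mem_nhdsWithin (s := Set.Ioi (0 : ℝ)))).exists
  exact ⟨ε, hεpos, hε⟩

/-- `p'` is the convex combination `(1 - l) p + l u` with `u = p' + ((1 - l) / l) (p' - p)` in the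
ball around `p'`. -/
theorem Convex.mk_smul_add_smul_mem {E F : Type*} [NormedAddCommGroup E] [NormedSpace ℝ E]
    [SeminormedAddCommGroup F] [Module ℝ F] {G : Set (E × F)} (hG : Convex ℝ G)
    {p p' : E} {y w : F} {ε l : ℝ} (hball : closedBall (p', w) ε ⊆ G) (hy : (p, y) ∈ G)
    (hl0 : 0 ≤ l) (hl1 : l ≤ 1) (hpl : ‖p - p'‖ ≤ l * ε) :
    (p', (1 - l) • y + l • w) ∈ G := by
  rcases hl0.eq_or_lt with rfl | hl
  · obtain rfl : p = p' := sub_eq_zero.mp (norm_le_zero_iff.mp (by simpa using hpl))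
    simpa using hy
  set u := p' + ((1 - l) / l) • (p' - p)
  have hu : (u, w) ∈ G := by
    refine hball ?_
    rw [mem_closedBall, Prod.dist_eq, dist_self, max_le_iff, dist_eq_norm]
    refine ⟨?_, le_of_mul_le_mul_left (by nlinarith [norm_nonneg (p - p')]) hl⟩
    rw [show u - p' = ((1 - l) / l) • (p' - p) by simp [u], norm_smul, norm_sub_rev,
      Real.norm_of_nonneg (div_nonneg (by linarith) hl.le), div_mul_eq_mul_div,
      div_le_iff₀ hl]
    nlinarith [norm_nonneg (p - p')]
  convert hG hy hu (sub_nonneg.2 hl1) hl.le (by ring) using 1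
  ext
  · simp only [Prod.fst_add, Prod.smul_fst, u, smul_add, smul_smul]
    rw [mul_div_cancel₀ _ hl.ne']
    module
  · rfl

theorem exists_mem_sub_le_of_closedBall_subset {E : Type*} [NormedAddCommGroup E]
    [NormedSpace ℝ E] {n : ℕ} {G : Set (E × EuclideanSpace ℝ (Fin n))} (hG : Convex ℝ G)
    (hG0 : ∀ q ∈ G, ∀ j, 0 ≤ q.2 j) {M ε : ℝ} (hGM : ∀ q ∈ G, ∀ j, q.2 j ≤ M) (hε : 0 < ε)
    {p p' : E} {y w : EuclideanSpace ℝ (Fin n)} (hball : closedBall (p', w) ε ⊆ G)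
    (hy : (p, y) ∈ G) :
    ∃ y', (p', y') ∈ G ∧ ∀ j, y j - M / ε * ‖p - p'‖ ≤ y' j := by
  have hw : (p', w) ∈ G := hball (mem_closedBall_self hε.le)
  by_cases hpp : ‖p - p'‖ ≤ ε
  · set l := ‖p - p'‖ / ε
    have hl1 : l ≤ 1 := (div_le_one hε).2 hpp
    refine ⟨(1 - l) • y + l • w, hG.mk_smul_add_smul_mem hball hy (by positivity) hl1
      (div_mul_cancel₀ _ hε.ne').ge, fun j => ?_⟩
    have hlM : M / ε * ‖p - p'‖ = l * M := by ring
    have hl0 : 0 ≤ l := by positivity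
    simp only [PiLp.add_apply, PiLp.smul_apply, smul_eq_mul, hlM]
    nlinarith [hG0 _ hy j, hG0 _ hw j, hGM _ hy j]
  · refine ⟨w, hw, fun j => ?_⟩
    have hM : M ≤ M / ε * ‖p - p'‖ := by
      rw [div_mul_eq_mul_div, le_div_iff₀ hε]
      nlinarith [hG0 _ hy j, hGM _ hy j]
    linarith [hG0 _ hw j, hGM _ hy j]

section LoadShedCost

variable {nG nL : ℕ} {DG : Set (EuclideanSpace ℝ (Fin nG))} {c : EuclideanSpace ℝ (Fin nL)}
  {G : Set (EuclideanSpace ℝ (Fin nG) × EuclideanSpace ℝ (Fin nL))}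
  {pG : EuclideanSpace ℝ (Fin nG)} {pD : EuclideanSpace ℝ (Fin nL)}

lemma loadShedCost_le (hc : ∀ j, 0 ≤ c j) {z : EuclideanSpace ℝ (Fin nL)} (hz : ∀ j, 0 ≤ z j)
    (hzG : (pG, pD - z) ∈ G) : loadShedCost c G pG pD ≤ ∑ j, c j * z j :=
  csInf_le ⟨0, by
    rintro _ ⟨z, hz, -, rfl⟩
    exact Finset.sum_nonneg fun j _ => mul_nonneg (hc j) (hz j)⟩ ⟨z, hz, hzG, rfl⟩

lemma le_loadShedCost {b : ℝ} (hne : ∃ z, (∀ j, 0 ≤ z j) ∧ (pG, pD - z) ∈ G)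
    (h : ∀ z : EuclideanSpace ℝ (Fin nL), (∀ j, 0 ≤ z j) → (pG, pD - z) ∈ G →
      b ≤ ∑ j, c j * z j) :
    b ≤ loadShedCost c G pG pD := by
  obtain ⟨z, hz, hzG⟩ := hne
  refine le_csInf ⟨_, z, hz, hzG, rfl⟩ ?_
  rintro _ ⟨z, hz, hzG, rfl⟩
  exact h z hz hzG

/-- The remaining load `pD - (pD - y)⁺ = min pD y` is feasible by over-satisfaction. -/
lemma IsAdmissibleFeasibilitySet.loadShedCost_le_of_mem (hA : IsAdmissibleFeasibilitySet DG G)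
    (hc : ∀ j, 0 ≤ c j) {y : EuclideanSpace ℝ (Fin nL)} (hy : (pG, y) ∈ G)
    (hpD : ∀ j, 0 ≤ pD j) :
    loadShedCost c G pG pD ≤ ∑ j, c j * posPart (pD - y) j := by
  refine loadShedCost_le hc (fun j => le_max_right _ _) (hA.oversat _ _ hy _ (fun j => ?_)
    (fun j => ?_))
  all_goals
    simp only [PiLp.sub_apply, posPart_apply]
    have := hA.snd_nonneg _ hy j
    have := hpD j
    cases max_cases (pD j - y j) 0 <;> linarith

lemma IsAdmissibleFeasibilitySet.loadShedCost_le_add (hA : IsAdmissibleFeasibilitySet DG G)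
    (hc : ∀ j, 0 ≤ c j) {M ε : ℝ} (hGM : ∀ q ∈ G, ∀ j, q.2 j ≤ M) (hε : 0 < ε)
    (hball : ∀ p ∈ DG, ∃ w, closedBall (p, w) ε ⊆ G)
    {p p' : EuclideanSpace ℝ (Fin nG)} (hp : p ∈ DG) (hp' : p' ∈ DG)
    {pD pD' : EuclideanSpace ℝ (Fin nL)} (hpD : ∀ j, 0 ≤ pD j) (hpD' : ∀ j, 0 ≤ pD' j) :
    loadShedCost c G p' pD' ≤
      loadShedCost c G p pD + (∑ j, c j) * (‖pD - pD'‖ + M / ε * ‖p - p'‖) := by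
  rw [← sub_le_iff_le_add]
  refine le_loadShedCost (hA.shed p hp pD hpD) fun z hz hzG => ?_
  obtain ⟨w, hw⟩ := hball p' hp'
  obtain ⟨y', hy'G, hy'⟩ :=
    exists_mem_sub_le_of_closedBall_subset hA.convex hA.snd_nonneg hGM hε hw hzG
  rw [sub_le_iff_le_add]
  refine (hA.loadShedCost_le_of_mem hc hy'G hpD').trans
    (Finset.sum_mul_le_sum_mul_add hc fun j => ?_)
  have hM : 0 ≤ M := (hA.snd_nonneg _ hzG j).trans (hGM _ hzG j)
  have hj := hy' j
  have hΔ := (abs_le.mp (EuclideanSpace.abs_apply_le_norm (pD - pD') j)).1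
  simp only [PiLp.sub_apply, posPart_apply] at hj hΔ ⊢
  have : 0 ≤ M / ε * ‖p - p'‖ := by positivity
  exact max_le (by linarith) (by linarith [hz j, norm_nonneg (pD - pD')])

theorem IsAdmissibleFeasibilitySet.exists_abs_loadShedCost_sub_le
    (hA : IsAdmissibleFeasibilitySet DG G) (hDG : IsCompact DG) (hc : ∀ j, 0 ≤ c j) :
    ∃ K ≥ 0, ∀ p ∈ DG, ∀ p' ∈ DG, ∀ pD pD' : EuclideanSpace ℝ (Fin nL),
      (∀ j, 0 ≤ pD j) → (∀ j, 0 ≤ pD' j) →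
      |loadShedCost c G p pD - loadShedCost c G p' pD'| ≤ K * (‖pD - pD'‖ + ‖p - p'‖) := by
  obtain ⟨M, hM, hGM⟩ := hA.compact.isBounded.exists_pos_norm_le
  have hGM' : ∀ q ∈ G, ∀ j, q.2 j ≤ M := fun q hq j =>
    (le_abs_self _).trans <| (EuclideanSpace.abs_apply_le_norm q.2 j).trans <|
      (norm_snd_le q).trans (hGM q hq)
  obtain ⟨ε, hε, hball⟩ := hDG.exists_pos_forall_closedBall_subset hA.interior_slice
  have hS : 0 ≤ ∑ j, c j := Finset.sum_nonneg fun j _ => hc j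
  have hMε : 0 ≤ M / ε := by positivity
  refine ⟨(∑ j, c j) * (1 + M / ε), by positivity, fun p hp p' hp' pD pD' hpD hpD' => ?_⟩
  have hmono : ∀ a b : ℝ, 0 ≤ a → 0 ≤ b →
      (∑ j, c j) * (a + M / ε * b) ≤ (∑ j, c j) * (1 + M / ε) * (a + b) := fun a b ha hb => by
    nlinarith [mul_nonneg hS (mul_nonneg hMε ha), mul_nonneg hS hb]
  have h₁ := hA.loadShedCost_le_add hc hGM' hε hball hp hp' hpD hpD'
  have h₂ := hA.loadShedCost_le_add hc hGM' hε hball hp' hp hpD' hpD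
  rw [norm_sub_rev pD', norm_sub_rev p'] at h₂
  have := hmono _ _ (norm_nonneg (pD - pD')) (norm_nonneg (p - p'))
  rw [abs_sub_le_iff]
  constructor <;> linarith

end LoadShedCost

lemma abs_add_sum_mul_sub_add_sum_mul_le {ι : Type*} [Fintype ι] {a a' L d : ℝ}
    {q K f f' : ι → ℝ} (hq : ∀ i, 0 ≤ q i) (ha : |a - a'| ≤ L * d)
    (hf : ∀ i, |f i - f' i| ≤ K i * d) :
    |(a + ∑ i, q i * f i) - (a' + ∑ i, q i * f' i)| ≤ (L + ∑ i, q i * K i) * d := by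
  have hsum : |∑ i, q i * f i - ∑ i, q i * f' i| ≤ (∑ i, q i * K i) * d := by
    rw [← Finset.sum_sub_distrib, Finset.sum_mul]
    refine (Finset.abs_sum_le_sum_abs _ _).trans (Finset.sum_le_sum fun i _ => ?_)
    rw [← mul_sub, abs_mul, abs_of_nonneg (hq i), mul_assoc]
    exact mul_le_mul_of_nonneg_left (hf i) (hq i)
  calc |(a + ∑ i, q i * f i) - (a' + ∑ i, q i * f' i)|
      = |(a - a') + (∑ i, q i * f i - ∑ i, q i * f' i)| := by ring_nf
    _ ≤ |a - a'| + |∑ i, q i * f i - ∑ i, q i * f' i| := abs_add_le _ _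
    _ ≤ (L + ∑ i, q i * K i) * d := by linarith

theorem runningCost_lipschitz_general {nG nL nc : ℕ}
    (DG : Set (EuclideanSpace ℝ (Fin nG)))
    (hDGcomp : IsCompact DG)
    (c : EuclideanSpace ℝ (Fin nL)) (hc : ∀ j, 0 < c j)
    (G : Fin (nc + 1) → Set (EuclideanSpace ℝ (Fin nG) × EuclideanSpace ℝ (Fin nL)))
    (hG : ∀ i, IsAdmissibleFeasibilitySet DG (G i))
    (q : Fin (nc + 1) → ℝ) (hq : ∀ i, 0 ≤ q i)
    (CG : EuclideanSpace ℝ (Fin nG) → ℝ)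
    (hCG : ∃ L : ℝ, 0 ≤ L ∧ ∀ p ∈ DG, ∀ p' ∈ DG, |CG p - CG p'| ≤ L * ‖p - p'‖) :
    ∃ C₂ : ℝ, 0 < C₂ ∧
      ∀ x x' : EuclideanSpace ℝ (Fin nL), ∀ pG ∈ DG, ∀ pG' ∈ DG,
        |(CG pG + ∑ i, q i * loadShedCost c (G i) pG (posPart x)) -
            (CG pG' + ∑ i, q i * loadShedCost c (G i) pG' (posPart x'))| ≤
          C₂ * (‖x - x'‖ + ‖pG - pG'‖) := by
  obtain ⟨L, hL, hCG⟩ := hCG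
  choose K hK hΦ using fun i => (hG i).exists_abs_loadShedCost_sub_le hDGcomp fun j => (hc j).le
  have hqK : 0 ≤ ∑ i, q i * K i := Finset.sum_nonneg fun i _ => mul_nonneg (hq i) (hK i)
  refine ⟨L + ∑ i, q i * K i + 1, by positivity, fun x x' pG hpG pG' hpG' => ?_⟩
  set d := ‖x - x'‖ + ‖pG - pG'‖
  have hd : 0 ≤ d := by positivity
  have hx : ‖posPart x - posPart x'‖ ≤ ‖x - x'‖ := norm_posPart_sub_posPart_le x x'
  have hCGd : |CG pG - CG pG'| ≤ L * d :=
    (hCG pG hpG pG' hpG').trans (by gcongr; linarith [norm_nonneg (x - x')])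
  have hΦd : ∀ i, |loadShedCost c (G i) pG (posPart x) - loadShedCost c (G i) pG' (posPart x')|
      ≤ K i * d := fun i =>
    (hΦ i pG hpG pG' hpG' _ _ (fun j => le_max_right _ _) fun j => le_max_right _ _).trans
      (mul_le_mul_of_nonneg_left (by linarith) (hK i))
  calc _ ≤ (L + ∑ i, q i * K i) * d := abs_add_sum_mul_sub_add_sum_mul_le hq hCGd hΦd
    _ ≤ (L + ∑ i, q i * K i + 1) * d := by linarith

/-- if `C_G` is Lipschitz on `D_G`, then the running cost
`g(x, p_G) = C_G(p_G) + Σ_i q_i Φ_{G_i}(p_G, x⁺)` is jointly Lipschitz in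
`(x, p_G) ∈ ℝ^{n_L} × D_G`. -/
theorem runningCost_lipschitz {nG nL nc : ℕ} (hnG : 1 ≤ nG) (hnL : 1 ≤ nL)
    (DG : Set (EuclideanSpace ℝ (Fin nG))) (hDGne : DG.Nonempty)
    (hDGconv : Convex ℝ DG) (hDGcomp : IsCompact DG)
    (c : EuclideanSpace ℝ (Fin nL)) (hc : ∀ j, 0 < c j)
    (G : Fin (nc + 1) → Set (EuclideanSpace ℝ (Fin nG) × EuclideanSpace ℝ (Fin nL)))
    (hG : ∀ i, IsAdmissibleFeasibilitySet DG (G i))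
    (q : Fin (nc + 1) → ℝ) (hq : ∀ i, 0 ≤ q i)
    (CG : EuclideanSpace ℝ (Fin nG) → ℝ)
    (hCG : ∃ L : ℝ, 0 ≤ L ∧ ∀ p ∈ DG, ∀ p' ∈ DG, |CG p - CG p'| ≤ L * ‖p - p'‖) :
    ∃ C₂ : ℝ, 0 < C₂ ∧
      ∀ x x' : EuclideanSpace ℝ (Fin nL), ∀ pG ∈ DG, ∀ pG' ∈ DG,
        |(CG pG + ∑ i, q i * loadShedCost c (G i) pG (posPart x)) -
            (CG pG' + ∑ i, q i * loadShedCost c (G i) pG' (posPart x'))| ≤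
          C₂ * (‖x - x'‖ + ‖pG - pG'‖) :=
  runningCost_lipschitz_general DG hDGcomp c hc G hG q hq CG hCG
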